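/- Policy gradient theorem with advantage weighting for the follower phase: in the finite phase-separated co-design model, for all θ ∈ ℝ^m and φ ∈ ℝ^n, ∇_φ J_F(θ,φ) = Σ_τ P(τ;θ,φ) · Σ_{k=0}^{H−1} γ^k ∇_φ log π_F(φ)(b_k|x_k;s_T) · A_F^{φ,k}(x_k,b_k;s_T). -/

import Mathlib

open scoped BigOperators

/-- A trajectory in the finite phase-separated co-design model, with leader horizon
`T + 1` (so `T + 1 ≥ 1`) and follower horizon `H + 1` (so `H + 1 ≥ 1`):
leader states `s 0, …, s (T+1)`, leader actions `a 0, …, a T`,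
follower states `x 0, …, x H` and follower actions `b 0, …, b H`. -/
structure Traj (SL AL SF AF : Type) (T H : ℕ) where
  s : Fin (T + 2) → SL
  a : Fin (T + 1) → AL
  x : Fin (H + 1) → SF
  b : Fin (H + 1) → AF

instance instFintypeTraj (SL AL SF AF : Type) (T H : ℕ)
    [Fintype SL] [Fintype AL] [Fintype SF] [Fintype AF] :
    Fintype (Traj SL AL SF AF T H) :=
  Fintype.ofEquiv
    ((Fin (T + 2) → SL) × (Fin (T + 1) → AL) × (Fin (H + 1) → SF) × (Fin (H + 1) → AF))
    { toFun := fun p => ⟨p.1, p.2.1, p.2.2.1, p.2.2.2⟩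
      invFun := fun τ => ⟨τ.s, τ.a, τ.x, τ.b⟩
      left_inv := fun _ => rfl
      right_inv := fun _ => rfl }

variable {SL AL SF AF : Type} [Fintype SL] [Fintype AL] [Fintype SF] [Fintype AF]
variable {m n T H : ℕ}

/-- The terminal morphology `s_T` of a trajectory. -/
def Traj.z (τ : Traj SL AL SF AF T H) : SL := τ.s (Fin.last (T + 1))

/-- Probability `P(τ; θ, φ)` of a trajectory. -/
def trajProb (μL : SL → ℝ) (PL : SL → AL → SL → ℝ) (μF : SL → SF → ℝ)
    (PF : SL → SF → AF → SF → ℝ) (πL : (Fin m → ℝ) → SL → AL → ℝ)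
    (πF : (Fin n → ℝ) → SL → SF → AF → ℝ) (θ : Fin m → ℝ) (φ : Fin n → ℝ)
    (τ : Traj SL AL SF AF T H) : ℝ :=
  μL (τ.s 0) *
    (∏ t : Fin (T + 1),
      πL θ (τ.s t.castSucc) (τ.a t) * PL (τ.s t.castSucc) (τ.a t) (τ.s t.succ)) *
    μF τ.z (τ.x 0) *
    (∏ k : Fin (H + 1), πF φ τ.z (τ.x k) (τ.b k)) *
    (∏ k : Fin H, PF τ.z (τ.x k.castSucc) (τ.b k.castSucc) (τ.x k.succ))

/-- Follower objective `J_F(θ, φ)`. -/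
def JF (γ : ℝ) (μL : SL → ℝ) (PL : SL → AL → SL → ℝ) (μF : SL → SF → ℝ)
    (PF : SL → SF → AF → SF → ℝ) (RF : SL → SF → AF → ℝ)
    (πL : (Fin m → ℝ) → SL → AL → ℝ) (πF : (Fin n → ℝ) → SL → SF → AF → ℝ)
    (T H : ℕ) (θ : Fin m → ℝ) (φ : Fin n → ℝ) : ℝ :=
  ∑ τ : Traj SL AL SF AF T H, trajProb μL PL μF PF πL πF θ φ τ *
    ∑ k : Fin (H + 1), γ ^ (k : ℕ) * RF τ.z (τ.x k) (τ.b k)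

/-- Leader objective `J_L(θ, φ)`. -/
def JL (γ : ℝ) (μL : SL → ℝ) (PL : SL → AL → SL → ℝ) (μF : SL → SF → ℝ)
    (PF : SL → SF → AF → SF → ℝ) (RL : SL → AL → ℝ) (RF : SL → SF → AF → ℝ)
    (πL : (Fin m → ℝ) → SL → AL → ℝ) (πF : (Fin n → ℝ) → SL → SF → AF → ℝ)
    (T H : ℕ) (θ : Fin m → ℝ) (φ : Fin n → ℝ) : ℝ :=
  ∑ τ : Traj SL AL SF AF T H, trajProb μL PL μF PF πL πF θ φ τ *
    ((∑ t : Fin (T + 1), γ ^ (t : ℕ) * RL (τ.s t.castSucc) (τ.a t)) +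
      γ ^ (T + 1) * ∑ k : Fin (H + 1), γ ^ (k : ℕ) * RF τ.z (τ.x k) (τ.b k))

/-- Follower state-action value `Q_F^{φ,k}(x, b; z)`, written in terms of the number
`r` of remaining follower steps after the current one (at stage `k` of a follower
phase with horizon `H + 1`, one has `r = H - k`): the expectation of the discounted
reward-to-go `∑_{j = k}^{H} γ^{j - k} R_F(z, x_j, b_j)` over follower trajectories
generated from `x, b` by `P_F(·|z,·,·)` and `π_F(φ)(·|·; z)`. -/
def Qrem (γ : ℝ) (PF : SL → SF → AF → SF → ℝ) (RF : SL → SF → AF → ℝ)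
    (πF : (Fin n → ℝ) → SL → SF → AF → ℝ) (z : SL) (φ : Fin n → ℝ) :
    ℕ → SF → AF → ℝ
  | 0, x, b => RF z x b
  | r + 1, x, b => RF z x b +
      γ * ∑ x' : SF, PF z x b x' * ∑ b' : AF, πF φ z x' b' * Qrem γ PF RF πF z φ r x' b'

/-- Follower advantage `A_F^{φ,k}(x, b; z) = Q_F^{φ,k}(x, b; z) - V_F^{φ,k}(x; z)`,
again indexed by the number `r = H - k` of remaining follower steps. -/
def advF (γ : ℝ) (PF : SL → SF → AF → SF → ℝ) (RF : SL → SF → AF → ℝ)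
    (πF : (Fin n → ℝ) → SL → SF → AF → ℝ) (z : SL) (φ : Fin n → ℝ)
    (r : ℕ) (x : SF) (b : AF) : ℝ :=
  Qrem γ PF RF πF z φ r x b -
    ∑ b' : AF, πF φ z x b' * Qrem γ PF RF πF z φ r x b'

/-- Leader state-action value `Q_L^{θ,φ,t}(s, a)`, indexed by the number `r` of
remaining leader steps after the current one (at stage `t` of a leader phase with
horizon `T + 1`, one has `r = T - t`); the follower phase has horizon `H + 1`. -/
def QLrem (γ : ℝ) (PL : SL → AL → SL → ℝ) (μF : SL → SF → ℝ)
    (PF : SL → SF → AF → SF → ℝ) (RL : SL → AL → ℝ) (RF : SL → SF → AF → ℝ)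
    (πL : (Fin m → ℝ) → SL → AL → ℝ) (πF : (Fin n → ℝ) → SL → SF → AF → ℝ)
    (H : ℕ) (θ : Fin m → ℝ) (φ : Fin n → ℝ) : ℕ → SL → AL → ℝ
  | 0, s, a => RL s a + γ * ∑ z : SL, PL s a z *
      ∑ x : SF, μF z x * ∑ b : AF, πF φ z x b * Qrem γ PF RF πF z φ H x b
  | r + 1, s, a => RL s a + γ * ∑ s' : SL, PL s a s' *
      ∑ a' : AL, πL θ s' a' * QLrem γ PL μF PF RL RF πL πF H θ φ r s' a'

/-- Leader advantage `A_L^{θ,φ,t}(s, a) = Q_L^{θ,φ,t}(s, a) - V_L^{θ,φ,t}(s)`,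
indexed by the number `r = T - t` of remaining leader steps. -/
def advL (γ : ℝ) (PL : SL → AL → SL → ℝ) (μF : SL → SF → ℝ)
    (PF : SL → SF → AF → SF → ℝ) (RL : SL → AL → ℝ) (RF : SL → SF → AF → ℝ)
    (πL : (Fin m → ℝ) → SL → AL → ℝ) (πF : (Fin n → ℝ) → SL → SF → AF → ℝ)
    (H : ℕ) (θ : Fin m → ℝ) (φ : Fin n → ℝ) (r : ℕ) (s : SL) (a : AL) : ℝ :=
  QLrem γ PL μF PF RL RF πL πF H θ φ r s a -
    ∑ a' : AL, πL θ s a' * QLrem γ PL μF PF RL RF πL πF H θ φ r s a'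


/-!
Only the follower factor `∏ₖ π_F(φ)(b_k|x_k;s_T)` of `P(τ)` depends on `φ`, so the log-derivative
trick gives `∇_φ J_F = E[(∑ₖ ∇ log π_F(b_k|x_k;s_T)) · ∑ⱼ γ^j R_F(s_T,x_j,b_j)]`. Conditionally on
`s_T` this is an identity about follower paths alone, proved by induction on the follower horizon
by peeling off the first step. Since a score `g` has `∑_b π_F(b|x) g(x,b) = 0`, it is uncorrelated
with every reward collected before it; the rewards collected from step `k` on average to `Q_F`,
and the same identity shows that subtracting the baseline `V_F` changes nothing.
-/

open Finset

section LogDerivative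

variable {E : Type*} [NormedAddCommGroup E] [NormedSpace ℝ E] {x : E}

lemma mul_fderiv_log_apply {f : E → ℝ} (hf : DifferentiableAt ℝ f x) (hx : f x ≠ 0) (v : E) :
    f x * fderiv ℝ (fun y => Real.log (f y)) x v = fderiv ℝ f x v := by
  rw [fderiv.log hf hx, smul_apply, smul_eq_mul, mul_inv_cancel_left₀ hx]

lemma fderiv_finsetProd_apply_eq_mul_sum_fderiv_log {ι : Type*} [DecidableEq ι] (s : Finset ι)
    {f : ι → E → ℝ} (hf : ∀ i ∈ s, DifferentiableAt ℝ (f i) x) (hf0 : ∀ i ∈ s, f i x ≠ 0)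
    (v : E) :
    fderiv ℝ (fun y => ∏ i ∈ s, f i y) x v =
      (∏ i ∈ s, f i x) * ∑ i ∈ s, fderiv ℝ (fun y => Real.log (f i y)) x v := by
  rw [fderiv_finsetProd hf, _root_.sum_apply, mul_sum]
  refine sum_congr rfl fun i hi => ?_
  rw [smul_apply, smul_eq_mul, ← prod_erase_mul s _ hi, mul_assoc,
    mul_fderiv_log_apply (hf i hi) (hf0 i hi)]

lemma sum_mul_fderiv_log_eq_zero {ι : Type*} [Fintype ι] {f : ι → E → ℝ}
    (hf : ∀ i, DifferentiableAt ℝ (f i) x) (hf0 : ∀ i, f i x ≠ 0) (hsum : ∀ y, ∑ i, f i y = 1)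
    (v : E) :
    ∑ i, f i x * fderiv ℝ (fun y => Real.log (f i y)) x v = 0 := by
  have hconst : (fun y => ∑ i, f i y) = fun _ => (1 : ℝ) := funext hsum
  simp only [mul_fderiv_log_apply (hf _) (hf0 _)]
  rw [← _root_.sum_apply, ← fderiv_fun_sum fun i _ => hf i, hconst, fderiv_fun_const]
  rfl

end LogDerivative

lemma sum_pi_fin_succ {α M : Type*} [Fintype α] [AddCommMonoid M] {N : ℕ}
    (f : (Fin (N + 1) → α) → M) :
    ∑ g : Fin (N + 1) → α, f g = ∑ a : α, ∑ g : Fin N → α, f (Fin.cons a g) := by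
  rw [← (Fin.consEquiv fun _ => α).sum_comp f, Fintype.sum_prod_type]
  rfl

lemma sum_pi_fin_one {α M : Type*} [Fintype α] [AddCommMonoid M] (f : (Fin 1 → α) → M) :
    ∑ g : Fin 1 → α, f g = ∑ a : α, f fun _ => a :=
  ((Equiv.funUnique (Fin 1) α).symm.sum_comp f).symm

section FollowerPath

def pathWeight (ν : SF → ℝ) (p : SF → AF → ℝ) (P : SF → AF → SF → ℝ) (H : ℕ)
    (x : Fin (H + 1) → SF) (b : Fin (H + 1) → AF) : ℝ :=
  ν (x 0) * (∏ k, p (x k) (b k)) * ∏ k : Fin H, P (x k.castSucc) (b k.castSucc) (x k.succ)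

def pathExpect (ν : SF → ℝ) (p : SF → AF → ℝ) (P : SF → AF → SF → ℝ) (H : ℕ)
    (F : (Fin (H + 1) → SF) → (Fin (H + 1) → AF) → ℝ) : ℝ :=
  ∑ x, ∑ b, pathWeight ν p P H x b * F x b

variable {p : SF → AF → ℝ} {P : SF → AF → SF → ℝ}

omit [Fintype SF] [Fintype AF] in
lemma pathWeight_cons (ν : SF → ℝ) (x₀ : SF) (b₀ : AF) (x : Fin (H + 1) → SF)
    (b : Fin (H + 1) → AF) :
    pathWeight ν p P (H + 1) (Fin.cons x₀ x) (Fin.cons b₀ b) =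
      ν x₀ * p x₀ b₀ * pathWeight (P x₀ b₀) p P H x b := by
  simp only [pathWeight, Fin.prod_univ_succ, Fin.cons_zero, Fin.cons_succ, Fin.castSucc_zero,
    ← Fin.succ_castSucc]
  ring

lemma pathExpect_zero (ν : SF → ℝ) (F : (Fin 1 → SF) → (Fin 1 → AF) → ℝ) :
    pathExpect ν p P 0 F = ∑ x₀, ν x₀ * ∑ b₀, p x₀ b₀ * F (fun _ => x₀) (fun _ => b₀) := by
  rw [pathExpect, sum_pi_fin_one]
  refine sum_congr rfl fun x₀ _ => ?_
  rw [sum_pi_fin_one, mul_sum]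
  simp only [pathWeight, Fin.prod_univ_succ, Fin.prod_univ_zero, mul_one, mul_assoc]

lemma pathExpect_succ (ν : SF → ℝ) (F : (Fin (H + 2) → SF) → (Fin (H + 2) → AF) → ℝ) :
    pathExpect ν p P (H + 1) F = ∑ x₀, ν x₀ * ∑ b₀, p x₀ b₀ *
      pathExpect (P x₀ b₀) p P H fun x b => F (Fin.cons x₀ x) (Fin.cons b₀ b) := by
  simp only [pathExpect, sum_pi_fin_succ (N := H + 1), pathWeight_cons, mul_sum, mul_assoc]
  exact sum_congr rfl fun x₀ _ => sum_comm

lemma pathExpect_add (ν : SF → ℝ) (F G : (Fin (H + 1) → SF) → (Fin (H + 1) → AF) → ℝ) :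
    pathExpect ν p P H (fun x b => F x b + G x b) =
      pathExpect ν p P H F + pathExpect ν p P H G := by
  simp only [pathExpect, mul_add, sum_add_distrib]

lemma pathExpect_const_mul (ν : SF → ℝ) (c : ℝ)
    (F : (Fin (H + 1) → SF) → (Fin (H + 1) → AF) → ℝ) :
    pathExpect ν p P H (fun x b => c * F x b) = c * pathExpect ν p P H F := by
  simp only [pathExpect, mul_sum, mul_left_comm]

variable (hp : ∀ x, ∑ b, p x b = 1) (hP : ∀ x b, ∑ x', P x b x' = 1)
include hp hP

lemma pathExpect_const (ν : SF → ℝ) (c : ℝ) :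
    pathExpect ν p P H (fun _ _ => c) = c * ∑ x, ν x := by
  induction H generalizing ν with
  | zero => simp only [pathExpect_zero, ← sum_mul, hp, one_mul, mul_comm c]
  | succ H ih => simp only [pathExpect_succ, ih, hP, ← sum_mul, hp, one_mul, mul_comm c]

lemma pathExpect_sum_eq_zero {g : SF → AF → ℝ} (hg : ∀ x, ∑ b, p x b * g x b = 0)
    (ν : SF → ℝ) :
    pathExpect ν p P H (fun x b => ∑ k, g (x k) (b k)) = 0 := by
  induction H generalizing ν with
  | zero =>
    simp only [pathExpect_zero, Fin.sum_univ_succ, Fin.sum_univ_zero, add_zero, hg, mul_zero,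
      sum_const_zero]
  | succ H ih =>
    simp only [pathExpect_succ, Fin.sum_univ_succ (n := H + 1), Fin.cons_zero, Fin.cons_succ]
    simp only [pathExpect_add, pathExpect_const hp hP, ih, hP, mul_one, add_zero, hg, mul_zero,
      sum_const_zero]

lemma pathExpect_add_mul_add (ν : SF → ℝ) (a c d : ℝ)
    (F G : (Fin (H + 1) → SF) → (Fin (H + 1) → AF) → ℝ) :
    pathExpect ν p P H (fun x b => (a + F x b) * (c + d * G x b)) =
      a * (c * ∑ x, ν x + d * pathExpect ν p P H G) + c * pathExpect ν p P H F +
        d * pathExpect ν p P H (fun x b => F x b * G x b) := by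
  have hexpand : (fun x b => (a + F x b) * (c + d * G x b)) = fun x b =>
      (a * c + a * d * G x b + c * F x b) + d * (F x b * G x b) := by
    funext x b; ring
  rw [hexpand]
  simp only [pathExpect_add, pathExpect_const_mul, pathExpect_const hp hP]
  ring

end FollowerPath

lemma Fin.sum_pow_mul_eq_add_mul_sum (γ : ℝ) {N : ℕ} (f : Fin (N + 2) → ℝ) :
    ∑ k : Fin (N + 2), γ ^ (k : ℕ) * f k =
      f 0 + γ * ∑ k : Fin (N + 1), γ ^ (k : ℕ) * f k.succ := by
  simp only [Fin.sum_univ_succ (n := N + 1), Fin.val_zero, pow_zero, one_mul, Fin.val_succ,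
    pow_succ', mul_sum, mul_assoc]

section FollowerValue

omit [Fintype SL]

variable (γ : ℝ) (PF : SL → SF → AF → SF → ℝ) (RF : SL → SF → AF → ℝ)
  (πF : (Fin n → ℝ) → SL → SF → AF → ℝ) (z : SL) (φ : Fin n → ℝ)

lemma sum_mul_advF {g : SF → AF → ℝ} (hg : ∀ x, ∑ b, πF φ z x b * g x b = 0) (r : ℕ)
    (x : SF) :
    ∑ b, πF φ z x b * (g x b * advF γ PF RF πF z φ r x b) =
      ∑ b, πF φ z x b * (g x b * Qrem γ PF RF πF z φ r x b) := by
  simp only [advF, mul_sub, sum_sub_distrib, ← mul_assoc, ← sum_mul, hg, zero_mul, sub_zero]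

lemma sum_mul_advF_add {g : SF → AF → ℝ} (hg : ∀ x, ∑ b, πF φ z x b * g x b = 0) (r : ℕ)
    (x : SF) (c : AF → ℝ) :
    ∑ b, πF φ z x b * (g x b * advF γ PF RF πF z φ r x b + c b) =
      ∑ b, πF φ z x b * (g x b * Qrem γ PF RF πF z φ r x b + c b) := by
  simp only [mul_add, sum_add_distrib, sum_mul_advF γ PF RF πF z φ hg]

variable {γ PF RF πF z φ} (hp : ∀ x, ∑ b, πF φ z x b = 1) (hP : ∀ x b, ∑ x', PF z x b x' = 1)
include hp hP

lemma pathExpect_discountedReturn (ν : SF → ℝ) :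
    pathExpect ν (πF φ z) (PF z) H
        (fun x b => ∑ k : Fin (H + 1), γ ^ (k : ℕ) * RF z (x k) (b k)) =
      ∑ x₀, ν x₀ * ∑ b₀, πF φ z x₀ b₀ * Qrem γ PF RF πF z φ H x₀ b₀ := by
  induction H generalizing ν with
  | zero =>
    simp only [pathExpect_zero, Fin.sum_univ_succ, Fin.sum_univ_zero, add_zero, Fin.val_zero,
      pow_zero, one_mul, Qrem]
  | succ H ih =>
    simp only [pathExpect_succ, Fin.sum_pow_mul_eq_add_mul_sum, Fin.cons_zero, Fin.cons_succ,
      pathExpect_add, pathExpect_const hp hP, pathExpect_const_mul, ih, hP, mul_one, Qrem]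

lemma pathExpect_score_mul_discountedReturn {g : SF → AF → ℝ}
    (hg : ∀ x, ∑ b, πF φ z x b * g x b = 0) (ν : SF → ℝ) :
    pathExpect ν (πF φ z) (PF z) H (fun x b =>
        (∑ k, g (x k) (b k)) * ∑ k : Fin (H + 1), γ ^ (k : ℕ) * RF z (x k) (b k)) =
      pathExpect ν (πF φ z) (PF z) H (fun x b => ∑ k : Fin (H + 1),
        γ ^ (k : ℕ) * (g (x k) (b k) * advF γ PF RF πF z φ (H - k) (x k) (b k))) := by
  induction H generalizing ν with
  | zero =>
    simp only [pathExpect_zero, Fin.sum_univ_succ, Fin.sum_univ_zero, add_zero, Fin.val_zero,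
      pow_zero, one_mul, Nat.sub_zero, sum_mul_advF γ PF RF πF z φ hg, Qrem]
  | succ H ih =>
    simp only [pathExpect_succ, Fin.sum_pow_mul_eq_add_mul_sum]
    simp only [Fin.sum_univ_succ (n := H + 1), Fin.cons_zero, Fin.cons_succ, Fin.val_zero,
      Fin.val_succ, Nat.sub_zero, Nat.add_sub_add_right]
    -- The first score multiplies `R_F + γ · E[return] = Q_F`, the later scores are uncorrelated
    -- with the first reward, and the product of the later scores and rewards is the induction step.
    simp only [pathExpect_add_mul_add hp hP, pathExpect_add, pathExpect_const hp hP,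
      pathExpect_const_mul, hP, pathExpect_discountedReturn hp hP,
      pathExpect_sum_eq_zero hp hP hg, ih, mul_one, mul_zero, add_zero, ← Qrem.eq_2,
      sum_mul_advF_add γ PF RF πF z φ hg]

end FollowerValue

lemma Traj.sum_eq_sum_mk (f : Traj SL AL SF AF T H → ℝ) :
    ∑ τ, f τ = ∑ s, ∑ a, ∑ x, ∑ b, f ⟨s, a, x, b⟩ := by
  let e : ((Fin (T + 2) → SL) × (Fin (T + 1) → AL) × (Fin (H + 1) → SF) × (Fin (H + 1) → AF))
      ≃ Traj SL AL SF AF T H :=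
    { toFun := fun p => ⟨p.1, p.2.1, p.2.2.1, p.2.2.2⟩
      invFun := fun τ => ⟨τ.s, τ.a, τ.x, τ.b⟩
      left_inv := fun _ => rfl
      right_inv := fun _ => rfl }
  simp only [← e.sum_comp f, Fintype.sum_prod_type]
  rfl

section Trajectory

variable (μL : SL → ℝ) (PL : SL → AL → SL → ℝ) (μF : SL → SF → ℝ) (PF : SL → SF → AF → SF → ℝ)
  (πL : (Fin m → ℝ) → SL → AL → ℝ) (πF : (Fin n → ℝ) → SL → SF → AF → ℝ) (θ : Fin m → ℝ)
  (φ : Fin n → ℝ)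

lemma sum_trajProb_mul_eq_of_pathExpect_eq
    {F G : SL → (Fin (H + 1) → SF) → (Fin (H + 1) → AF) → ℝ}
    (h : ∀ z, pathExpect (μF z) (πF φ z) (PF z) H (F z) =
      pathExpect (μF z) (πF φ z) (PF z) H (G z)) :
    ∑ τ : Traj SL AL SF AF T H, trajProb μL PL μF PF πL πF θ φ τ * F τ.z τ.x τ.b =
      ∑ τ : Traj SL AL SF AF T H, trajProb μL PL μF PF πL πF θ φ τ * G τ.z τ.x τ.b := by
  have hfactor : ∀ τ : Traj SL AL SF AF T H, trajProb μL PL μF PF πL πF θ φ τ =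
      (μL (τ.s 0) * ∏ t : Fin (T + 1),
        πL θ (τ.s t.castSucc) (τ.a t) * PL (τ.s t.castSucc) (τ.a t) (τ.s t.succ)) *
      pathWeight (μF τ.z) (πF φ τ.z) (PF τ.z) H τ.x τ.b := by
    intro τ
    simp only [trajProb, pathWeight]
    ring
  simp only [pathExpect] at h
  simp only [Traj.sum_eq_sum_mk, hfactor, Traj.z, mul_assoc, ← mul_sum, h]

end Trajectory

section PolicyGradient

variable (γ : ℝ) (μL : SL → ℝ) (PL : SL → AL → SL → ℝ) (μF : SL → SF → ℝ)
  (PF : SL → SF → AF → SF → ℝ) (RF : SL → SF → AF → ℝ) (πL : (Fin m → ℝ) → SL → AL → ℝ)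
  {πF : (Fin n → ℝ) → SL → SF → AF → ℝ} (θ : Fin m → ℝ) {φ : Fin n → ℝ}

-- Replacing `πF` by the constant `1` keeps exactly the factors of `P(τ)` that do not depend on `φ`.
omit [Fintype SL] [Fintype AL] [Fintype SF] [Fintype AF] in
lemma trajProb_eq_mul_prod (ψ : Fin n → ℝ) (τ : Traj SL AL SF AF T H) :
    trajProb μL PL μF PF πL πF θ φ τ =
      trajProb μL PL μF PF πL (fun _ _ _ _ => 1) θ ψ τ * ∏ k, πF φ τ.z (τ.x k) (τ.b k) := by
  simp only [trajProb, prod_const_one, mul_one]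
  ring

lemma fderiv_JF_apply (hπF0 : ∀ z x b, πF φ z x b ≠ 0)
    (hπF : ∀ z x b, DifferentiableAt ℝ (fun φ' => πF φ' z x b) φ) (v : Fin n → ℝ) :
    fderiv ℝ (fun φ' => JF γ μL PL μF PF RF πL πF T H θ φ') φ v =
      ∑ τ : Traj SL AL SF AF T H, trajProb μL PL μF PF πL πF θ φ τ *
        ((∑ k, fderiv ℝ (fun φ' => Real.log (πF φ' τ.z (τ.x k) (τ.b k))) φ v) *
          ∑ k : Fin (H + 1), γ ^ (k : ℕ) * RF τ.z (τ.x k) (τ.b k)) := by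
  let c : Traj SL AL SF AF T H → ℝ := fun τ =>
    trajProb μL PL μF PF πL (fun _ _ _ _ => 1) θ φ τ *
      ∑ k : Fin (H + 1), γ ^ (k : ℕ) * RF τ.z (τ.x k) (τ.b k)
  have hJF : (fun φ' => JF γ μL PL μF PF RF πL πF T H θ φ') =
      fun φ' => ∑ τ, c τ * ∏ k, πF φ' τ.z (τ.x k) (τ.b k) := by
    funext φ'
    refine sum_congr rfl fun τ _ => ?_
    rw [trajProb_eq_mul_prod μL PL μF PF πL θ φ]
    ring
  have hprod : ∀ τ : Traj SL AL SF AF T H,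
      DifferentiableAt ℝ (fun φ' => ∏ k, πF φ' τ.z (τ.x k) (τ.b k)) φ := fun τ =>
    (HasFDerivAt.finsetProd fun k _ => (hπF _ _ _).hasFDerivAt).differentiableAt
  rw [hJF, fderiv_fun_sum fun τ _ => (hprod τ).const_mul _, _root_.sum_apply]
  refine sum_congr rfl fun τ _ => ?_
  rw [fderiv_const_mul (hprod τ), smul_apply, smul_eq_mul,
    fderiv_finsetProd_apply_eq_mul_sum_fderiv_log _ (fun k _ => hπF _ _ _) (fun k _ => hπF0 _ _ _),
    trajProb_eq_mul_prod μL PL μF PF πL θ φ]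
  ring

end PolicyGradient

theorem follower_policy_gradient_advantage_general
    {SL AL SF AF : Type} [Fintype SL] [Fintype AL] [Fintype SF] [Fintype AF]
    {m n T H : ℕ} (γ : ℝ)
    (μL : SL → ℝ)
    (PL : SL → AL → SL → ℝ)
    (μF : SL → SF → ℝ)
    (PF : SL → SF → AF → SF → ℝ)
    (hPF1 : ∀ z x b, ∑ x' : SF, PF z x b x' = 1)
    (RF : SL → SF → AF → ℝ)
    (πL : (Fin m → ℝ) → SL → AL → ℝ)
    (πF : (Fin n → ℝ) → SL → SF → AF → ℝ) (hπF0 : ∀ φ z x b, 0 < πF φ z x b)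
    (hπF1 : ∀ φ z x, ∑ b : AF, πF φ z x b = 1)
    (hπFC : ∀ z x b, ContDiff ℝ 2 fun φ : Fin n → ℝ => πF φ z x b) :
    ∀ (θ : Fin m → ℝ) (φ : Fin n → ℝ) (j : Fin n),
      fderiv ℝ (fun φ' : Fin n → ℝ => JF γ μL PL μF PF RF πL πF T H θ φ') φ
          (Pi.single j 1)
        =
      ∑ τ : Traj SL AL SF AF T H,
        trajProb μL PL μF PF πL πF θ φ τ *
          ∑ k : Fin (H + 1), γ ^ (k : ℕ) *
            fderiv ℝ (fun φ' : Fin n → ℝ =>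
              Real.log (πF φ' τ.z (τ.x k) (τ.b k))) φ (Pi.single j 1) *
            advF γ PF RF πF τ.z φ (H - (k : ℕ)) (τ.x k) (τ.b k) := by
  intro θ φ j
  have hπF : ∀ z x b, DifferentiableAt ℝ (fun φ' => πF φ' z x b) φ :=
    fun z x b => (hπFC z x b).differentiable two_ne_zero φ
  have hπF0' : ∀ z x b, πF φ z x b ≠ 0 := fun z x b => (hπF0 φ z x b).ne'
  rw [fderiv_JF_apply γ μL PL μF PF RF πL θ hπF0' hπF]
  simp only [mul_assoc (γ ^ _)]
  refine sum_trajProb_mul_eq_of_pathExpect_eq μL PL μF PF πL πF θ φ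
    (F := fun z x b =>
      (∑ k, fderiv ℝ (fun φ' => Real.log (πF φ' z (x k) (b k))) φ (Pi.single j 1)) *
        ∑ k : Fin (H + 1), γ ^ (k : ℕ) * RF z (x k) (b k))
    (G := fun z x b => ∑ k : Fin (H + 1), γ ^ (k : ℕ) *
      (fderiv ℝ (fun φ' => Real.log (πF φ' z (x k) (b k))) φ (Pi.single j 1) *
        advF γ PF RF πF z φ (H - k) (x k) (b k))) fun z => ?_
  exact pathExpect_score_mul_discountedReturn (hπF1 φ z) (hPF1 z)
    (g := fun x b => fderiv ℝ (fun φ' => Real.log (πF φ' z x b)) φ (Pi.single j 1))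
    (fun x => sum_mul_fderiv_log_eq_zero (hπF z x) (hπF0' z x) (fun φ' => hπF1 φ' z x) _) (μF z)

/-- Policy gradient theorem with advantage weighting for the
follower phase: `∇_φ J_F(θ, φ) = ∑_τ P(τ;θ,φ) ∑_k γ^k ∇_φ log π_F(φ)(b_k|x_k;s_T) ·
A_F^{φ,k}(x_k, b_k; s_T)`, stated coordinatewise. -/
theorem follower_policy_gradient_advantage
    {SL AL SF AF : Type} [Fintype SL] [Fintype AL] [Fintype SF] [Fintype AF]
    [Nonempty SL] [Nonempty AL] [Nonempty SF] [Nonempty AF]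
    {m n T H : ℕ} (γ : ℝ) (hγ0 : 0 < γ) (hγ1 : γ ≤ 1)
    (μL : SL → ℝ) (hμL0 : ∀ s, 0 ≤ μL s) (hμL1 : ∑ s : SL, μL s = 1)
    (PL : SL → AL → SL → ℝ) (hPL0 : ∀ s a s', 0 ≤ PL s a s')
    (hPL1 : ∀ s a, ∑ s' : SL, PL s a s' = 1)
    (μF : SL → SF → ℝ) (hμF0 : ∀ z x, 0 ≤ μF z x) (hμF1 : ∀ z, ∑ x : SF, μF z x = 1)
    (PF : SL → SF → AF → SF → ℝ) (hPF0 : ∀ z x b x', 0 ≤ PF z x b x')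
    (hPF1 : ∀ z x b, ∑ x' : SF, PF z x b x' = 1)
    (RL : SL → AL → ℝ) (RF : SL → SF → AF → ℝ)
    (πL : (Fin m → ℝ) → SL → AL → ℝ) (hπL0 : ∀ θ s a, 0 < πL θ s a)
    (hπL1 : ∀ θ s, ∑ a : AL, πL θ s a = 1)
    (hπLC : ∀ s a, ContDiff ℝ 2 fun θ : Fin m → ℝ => πL θ s a)
    (πF : (Fin n → ℝ) → SL → SF → AF → ℝ) (hπF0 : ∀ φ z x b, 0 < πF φ z x b)
    (hπF1 : ∀ φ z x, ∑ b : AF, πF φ z x b = 1)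
    (hπFC : ∀ z x b, ContDiff ℝ 2 fun φ : Fin n → ℝ => πF φ z x b) :
    ∀ (θ : Fin m → ℝ) (φ : Fin n → ℝ) (j : Fin n),
      fderiv ℝ (fun φ' : Fin n → ℝ => JF γ μL PL μF PF RF πL πF T H θ φ') φ
          (Pi.single j 1)
        =
      ∑ τ : Traj SL AL SF AF T H,
        trajProb μL PL μF PF πL πF θ φ τ *
          ∑ k : Fin (H + 1), γ ^ (k : ℕ) *
            fderiv ℝ (fun φ' : Fin n → ℝ =>
              Real.log (πF φ' τ.z (τ.x k) (τ.b k))) φ (Pi.single j 1) *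
            advF γ PF RF πF τ.z φ (H - (k : ℕ)) (τ.x k) (τ.b k) :=
  follower_policy_gradient_advantage_general γ μL PL μF PF hPF1 RF πL πF hπF0 hπF1 hπFC
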